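/- The double series Σ_{d₁,d₂=1}^{∞} c_{d₁} gcd(d₁,d₂)/(d₁² d₂²) equals Σ_{d=1}^{∞} c_d²/d², where c_ℓ = Σ_{d=1}^{∞} gcd(d,ℓ)/d². -/
import Mathlib

open Real


/-- `c_ℓ = ∑_{d=1}^{∞} gcd(d,ℓ)/d²`. -/
noncomputable def cc (l : ℕ) : ℝ := ∑' d : ℕ, (Nat.gcd (d + 1) l : ℝ) / ((d + 1 : ℕ) ^ 2)

lemma summable_base : Summable (fun d : ℕ => 1 / ((d : ℝ) + 1) ^ 2) := by
  have := (summable_nat_add_iff (f := fun n : ℕ => 1 / (n : ℝ) ^ 2) 1).2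
    (summable_one_div_nat_pow.2 (by norm_num))
  exact this.congr (by intro n; push_cast; ring_nf)

lemma summable_gcd {a : ℕ} (ha : 0 < a) :
    Summable (fun d : ℕ => (Nat.gcd (d + 1) a : ℝ) / ((d + 1 : ℕ) ^ 2)) := by
  refine Summable.of_nonneg_of_le (fun d => by positivity) (fun d => ?_)
    (summable_base.mul_left (a : ℝ))
  push_cast
  rw [mul_one_div]
  gcongr
  exact_mod_cast Nat.le_of_dvd ha (Nat.gcd_dvd_right _ _)

lemma summable_shift {p : ℝ} (hp : p < -1) :
    Summable (fun d : ℕ => ((d : ℝ) + 1) ^ p) := by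
  have := (summable_nat_add_iff (f := fun n : ℕ => (n : ℝ) ^ p) 1).2
    (Real.summable_nat_rpow.2 hp)
  exact this.congr (by intro n; push_cast; ring_nf)

noncomputable def CC : ℝ := ∑' d : ℕ, ((d : ℝ) + 1) ^ (-(3/2) : ℝ)

lemma cc_nonneg (a : ℕ) : 0 ≤ cc a :=
  tsum_nonneg fun d => by positivity

lemma gcd_le_sqrt {m a : ℕ} (hm : 0 < m) (ha : 0 < a) :
    (Nat.gcd m a : ℝ) ≤ Real.sqrt m * Real.sqrt a := by
  rw [← Real.sqrt_mul_self (by positivity : (0:ℝ) ≤ (Nat.gcd m a : ℝ)),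
    ← Real.sqrt_mul (by positivity)]
  apply Real.sqrt_le_sqrt
  have h1 : Nat.gcd m a ≤ m := Nat.le_of_dvd hm (Nat.gcd_dvd_left _ _)
  have h2 : Nat.gcd m a ≤ a := Nat.le_of_dvd ha (Nat.gcd_dvd_right _ _)
  exact_mod_cast Nat.mul_le_mul h1 h2

lemma cc_le {a : ℕ} (ha : 0 < a) : cc a ≤ Real.sqrt a * CC := by
  rw [cc, CC, ← tsum_mul_left]
  refine Summable.tsum_le_tsum (fun d => ?_) (summable_gcd ha)
    ((summable_shift (by norm_num)).mul_left _)
  push_cast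
  have hx : (0:ℝ) < (d : ℝ) + 1 := by positivity
  have hg : (Nat.gcd (d+1) a : ℝ) ≤ Real.sqrt ((d:ℝ)+1) * Real.sqrt a := by
    have := gcd_le_sqrt (m := d+1) (Nat.succ_pos d) ha
    push_cast at this; exact this
  calc (Nat.gcd (d+1) a : ℝ) / ((d:ℝ)+1)^2
      ≤ (Real.sqrt ((d:ℝ)+1) * Real.sqrt a) / ((d:ℝ)+1)^2 := by gcongr
    _ = Real.sqrt a * (((d:ℝ)+1) ^ ((1:ℝ)/2) / ((d:ℝ)+1) ^ ((2:ℝ))) := by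
        rw [Real.sqrt_eq_rpow, Real.rpow_two]; ring
    _ = Real.sqrt a * ((d:ℝ)+1) ^ (-(3/2) : ℝ) := by
        rw [← Real.rpow_sub hx]; norm_num

lemma CC_nonneg : 0 ≤ CC := tsum_nonneg fun d => by positivity

lemma gcd_le_quarter {m a : ℕ} (hm : 0 < m) (ha : 0 < a) :
    (Nat.gcd m a : ℝ) ≤ ((m : ℝ)) ^ ((1:ℝ)/4) * ((a : ℝ)) ^ ((3:ℝ)/4) := by
  have hg : (0:ℝ) < (Nat.gcd m a : ℝ) := by
    exact_mod_cast Nat.gcd_pos_of_pos_left a hm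
  have h1 : (Nat.gcd m a : ℝ) ≤ (m : ℝ) := by
    exact_mod_cast Nat.le_of_dvd hm (Nat.gcd_dvd_left _ _)
  have h2 : (Nat.gcd m a : ℝ) ≤ (a : ℝ) := by
    exact_mod_cast Nat.le_of_dvd ha (Nat.gcd_dvd_right _ _)
  calc (Nat.gcd m a : ℝ) = (Nat.gcd m a : ℝ) ^ ((1:ℝ)/4) * (Nat.gcd m a : ℝ) ^ ((3:ℝ)/4) := by
        rw [← Real.rpow_add hg]; norm_num
    _ ≤ ((m : ℝ)) ^ ((1:ℝ)/4) * ((a : ℝ)) ^ ((3:ℝ)/4) :=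
        mul_le_mul (Real.rpow_le_rpow hg.le h1 (by norm_num))
          (Real.rpow_le_rpow hg.le h2 (by norm_num)) (by positivity) (by positivity)

lemma rpow_calc {a b : ℝ} (hapos : 0 < a) (hbpos : 0 < b) :
    (Real.sqrt a * CC) * (a ^ ((1:ℝ)/4) * b ^ ((3:ℝ)/4)) / (a ^ 2 * b ^ 2)
      = (CC * a ^ (-(5/4) : ℝ)) * (b ^ (-(5/4) : ℝ)) := by
  rw [Real.sqrt_eq_rpow, ← Real.rpow_natCast a 2, ← Real.rpow_natCast b 2]
  push_cast
  calc (a ^ ((1:ℝ)/2) * CC) * (a ^ ((1:ℝ)/4) * b ^ ((3:ℝ)/4)) / (a ^ ((2:ℝ)) * b ^ ((2:ℝ)))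
      = CC * (a ^ ((1:ℝ)/2) * a ^ ((1:ℝ)/4) / a ^ ((2:ℝ))) * (b ^ ((3:ℝ)/4) / b ^ ((2:ℝ))) := by
        ring
    _ = CC * a ^ ((1:ℝ)/2 + (1:ℝ)/4 - 2) * b ^ ((3:ℝ)/4 - 2) := by
        rw [← Real.rpow_add hapos, ← Real.rpow_sub hapos, ← Real.rpow_sub hbpos]
    _ = (CC * a ^ (-(5/4):ℝ)) * (b ^ (-(5/4):ℝ)) := by norm_num

lemma pointwise_bound (d1 d2 : ℕ) :
    cc (d1 + 1) * (Nat.gcd (d1 + 1) (d2 + 1) : ℝ) /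
      (((d1 + 1 : ℕ) : ℝ) ^ 2 * ((d2 + 1 : ℕ) : ℝ) ^ 2)
    ≤ (CC * ((d1 : ℝ) + 1) ^ (-(5/4) : ℝ)) * (((d2 : ℝ) + 1) ^ (-(5/4) : ℝ)) := by
  set a : ℝ := (d1 : ℝ) + 1 with hadef
  set b : ℝ := (d2 : ℝ) + 1 with hbdef
  have hapos : (0:ℝ) < a := by positivity
  have hbpos : (0:ℝ) < b := by positivity
  have hcc : cc (d1 + 1) ≤ Real.sqrt a * CC := by
    have := cc_le (a := d1 + 1) (Nat.succ_pos d1)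
    push_cast at this; exact this
  have hg : (Nat.gcd (d1 + 1) (d2 + 1) : ℝ) ≤ a ^ ((1:ℝ)/4) * b ^ ((3:ℝ)/4) := by
    have := gcd_le_quarter (m := d1 + 1) (a := d2 + 1) (Nat.succ_pos d1) (Nat.succ_pos d2)
    push_cast at this; exact this
  have hgnn : (0:ℝ) ≤ (Nat.gcd (d1 + 1) (d2 + 1) : ℝ) := by positivity
  have key : cc (d1 + 1) * (Nat.gcd (d1 + 1) (d2 + 1) : ℝ) /
      (((d1 + 1 : ℕ) : ℝ) ^ 2 * ((d2 + 1 : ℕ) : ℝ) ^ 2)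
      ≤ (Real.sqrt a * CC) * (a ^ ((1:ℝ)/4) * b ^ ((3:ℝ)/4)) / (a ^ 2 * b ^ 2) := by
    push_cast
    apply div_le_div₀ (mul_nonneg (mul_nonneg (Real.sqrt_nonneg a) CC_nonneg) (by positivity))
      (mul_le_mul hcc hg hgnn (mul_nonneg (Real.sqrt_nonneg a) CC_nonneg)) (by positivity) le_rfl
  exact key.trans (le_of_eq (rpow_calc hapos hbpos))

lemma summable_main : Summable (fun p : ℕ × ℕ => cc (p.1 + 1) * (Nat.gcd (p.1 + 1) (p.2 + 1) : ℝ) /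
    (((p.1 + 1 : ℕ) : ℝ) ^ 2 * ((p.2 + 1 : ℕ) : ℝ) ^ 2)) := by
  have hb := ((summable_shift (p := -(5/4)) (by norm_num)).mul_left CC).mul_of_nonneg
      (summable_shift (p := -(5/4)) (by norm_num))
      (fun d => mul_nonneg CC_nonneg (by positivity)) (fun d => by positivity)
  refine Summable.of_nonneg_of_le (fun p => ?_) (fun p => pointwise_bound p.1 p.2) hb
  have := cc_nonneg (p.1 + 1)
  positivity

lemma cc_eq (l : ℕ) : cc l = ∑' d : ℕ, (Nat.gcd (d + 1) l : ℝ) / ((d + 1 : ℕ) ^ 2) := rfl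

lemma innerSumEq (d1 : ℕ) :
    (∑' d2 : ℕ, cc (d1 + 1) * (Nat.gcd (d1 + 1) (d2 + 1) : ℝ) /
        (((d1 + 1 : ℕ) : ℝ) ^ 2 * ((d2 + 1 : ℕ) : ℝ) ^ 2)) =
      cc (d1 + 1) ^ 2 / ((d1 + 1 : ℕ) ^ 2) := by
  have h : ∀ d2 : ℕ, cc (d1 + 1) * (Nat.gcd (d1 + 1) (d2 + 1) : ℝ) /
      (((d1 + 1 : ℕ) : ℝ) ^ 2 * ((d2 + 1 : ℕ) : ℝ) ^ 2)
      = (cc (d1 + 1) / ((d1 + 1 : ℕ) : ℝ) ^ 2) *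
        ((Nat.gcd (d2 + 1) (d1 + 1) : ℝ) / ((d2 + 1 : ℕ) ^ 2)) := by
    intro d2
    rw [Nat.gcd_comm (d1 + 1) (d2 + 1), div_mul_div_comm]
  rw [tsum_congr h, tsum_mul_left, ← cc_eq]
  push_cast
  ring

lemma summable_inner (d1 : ℕ) :
    Summable (fun d2 : ℕ => cc (d1 + 1) * (Nat.gcd (d1 + 1) (d2 + 1) : ℝ) /
      (((d1 + 1 : ℕ) : ℝ) ^ 2 * ((d2 + 1 : ℕ) : ℝ) ^ 2)) := by
  have h := (summable_gcd (a := d1 + 1) (Nat.succ_pos d1)).mul_left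
    (cc (d1 + 1) / ((d1 + 1 : ℕ) : ℝ) ^ 2)
  refine h.congr fun d2 => ?_
  rw [Nat.gcd_comm (d2 + 1) (d1 + 1), div_mul_div_comm]

/-- `∑_{d₁,d₂=1}^{∞} c_{d₁}·gcd(d₁,d₂)/(d₁²d₂²) = ∑_{d=1}^{∞} c_d²/d²`. -/
theorem double_sum_eq_sum_cc_sq :
    (∑' p : ℕ × ℕ, cc (p.1 + 1) * (Nat.gcd (p.1 + 1) (p.2 + 1) : ℝ) /
        (((p.1 + 1 : ℕ) : ℝ) ^ 2 * ((p.2 + 1 : ℕ) : ℝ) ^ 2)) =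
      ∑' d : ℕ, cc (d + 1) ^ 2 / ((d + 1 : ℕ) ^ 2) := by
  rw [Summable.tsum_prod' summable_main (fun d1 => summable_inner d1)]
  exact tsum_congr fun d1 => innerSumEq d1
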